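/- arXiv:2412.10975 — 4 statements merged into one kernel-verified Lean document; each statement's English description precedes it below -/
import Mathlib

section
/- For any interpretation I of σ and any (extended first-order) sentence F over σ^I: I satisfies F iff I satisfies the grounding gr_I(F). -/
/- Many-sorted signatures for extended first-order logic. -/
structure Sig : Type 1 where
  So : Type
  Fn : Type
  Pr : Type
  fnArgs : Fn → List So
  fnVal : Fn → So
  prArgs : Pr → List So

variable {σ : Sig} {U : σ.So → Type}

/-- Terms over a signature, with names for elements of the universe `U`
(i.e. terms over `σ^I`). -/
inductive Term (σ : Sig) (U : σ.So → Type) : σ.So → Type where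
  | name : {s : σ.So} → U s → Term σ U s
  | app : (f : σ.Fn) →
      ((i : Fin (σ.fnArgs f).length) → Term σ U ((σ.fnArgs f).get i)) →
      Term σ U (σ.fnVal f)

/-- A (many-sorted) interpretation with universe `U`. -/
structure Interp (σ : Sig) (U : σ.So → Type) where
  fn : (f : σ.Fn) → ((i : Fin (σ.fnArgs f).length) → U ((σ.fnArgs f).get i)) → U (σ.fnVal f)
  pr : (p : σ.Pr) → ((i : Fin (σ.prArgs p).length) → U ((σ.prArgs p).get i)) → Prop

def Term.eval (I : Interp σ U) : {s : σ.So} → Term σ U s → U s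
  | _, .name d => d
  | _, .app f args => I.fn f (fun i => (args i).eval I)

/-- Extended first-order sentences over `σ^I`: built from atomic formulas and `⊥`
using `∧`, `∨`, `→`, the connective `⌐` (`snot`) and quantifiers
(quantified bodies are represented by functions on names of domain elements). -/
inductive Fml (σ : Sig) (U : σ.So → Type) : Type where
  | atom : (p : σ.Pr) →
      ((i : Fin (σ.prArgs p).length) → Term σ U ((σ.prArgs p).get i)) → Fml σ U
  | eq : {s : σ.So} → Term σ U s → Term σ U s → Fml σ U
  | fls : Fml σ U
  | conj : Fml σ U → Fml σ U → Fml σ U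
  | disj : Fml σ U → Fml σ U → Fml σ U
  | impl : Fml σ U → Fml σ U → Fml σ U
  | snot : Fml σ U → Fml σ U
  | all : (s : σ.So) → (U s → Fml σ U) → Fml σ U
  | ex : (s : σ.So) → (U s → Fml σ U) → Fml σ U

/-- `¬F` is the abbreviation `F → ⊥`. -/
def Fml.neg (F : Fml σ U) : Fml σ U := .impl F .fls

/-- Classical satisfaction `I ⊨ F` (with `⌐` as classical negation). -/
def satF (I : Interp σ U) : Fml σ U → Prop
  | .atom p args => I.pr p (fun i => (args i).eval I)
  | .eq t1 t2 => t1.eval I = t2.eval I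
  | .fls => False
  | .conj F G => satF I F ∧ satF I G
  | .disj F G => satF I F ∨ satF I G
  | .impl F G => satF I F → satF I G
  | .snot F => ¬ satF I F
  | .all s F => ∀ d : U s, satF I (F d)
  | .ex s F => ∃ d : U s, satF I (F d)

/-- ht-satisfaction `⟨H,I⟩ ⊨ht F`. -/
def htSat (H I : Interp σ U) : Fml σ U → Prop
  | .atom p args => satF I (.atom p args) ∧ satF H (.atom p args)
  | .eq t1 t2 => (t1.eval I = t2.eval I) ∧ (t1.eval H = t2.eval H)
  | .fls => False
  | .conj F G => htSat H I F ∧ htSat H I G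
  | .disj F G => htSat H I F ∨ htSat H I G
  | .impl F G => satF I (.impl F G) ∧ (¬ htSat H I F ∨ htSat H I G)
  | .snot F => ¬ satF I F ∧ ¬ satF H F
  | .all s F => ∀ d : U s, htSat H I (F d)
  | .ex s F => ∃ d : U s, htSat H I (F d)

/-- `H ⪯ I`, relative to the sets `IP` of intensional predicate constants and
`IFn` of intensional function constants (same universes are built in, since
both interpretations share `U`). -/
def preceq (IP : Set σ.Pr) (IFn : Set σ.Fn) (H I : Interp σ U) : Prop :=
  (∀ p ∈ IP, ∀ a, H.pr p a → I.pr p a) ∧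
  (∀ p ∉ IP, ∀ a, H.pr p a ↔ I.pr p a) ∧
  (∀ f ∉ IFn, ∀ a, H.fn f a = I.fn f a)

/-- A term contains no intensional function symbols (relative to the set `IFn`). -/
def Term.noIntensional (IFn : Set σ.Fn) : {s : σ.So} → Term σ U s → Prop
  | _, .name _ => True
  | _, .app f args => f ∉ IFn ∧ ∀ i, (args i).noIntensional IFn

/-- Infinitary ground formulas over `σ^I`: built from ground atomic formulas using
arbitrary (set-indexed) conjunctions `Γ^∧` and disjunctions `Γ^∨` (represented by
index types), implication and the connective `⌐`. -/
inductive IFml (σ : Sig) (U : σ.So → Type) : Type 1 where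
  | atom : (p : σ.Pr) →
      ((i : Fin (σ.prArgs p).length) → Term σ U ((σ.prArgs p).get i)) → IFml σ U
  | eq : {s : σ.So} → Term σ U s → Term σ U s → IFml σ U
  | conj : (ι : Type) → (ι → IFml σ U) → IFml σ U
  | disj : (ι : Type) → (ι → IFml σ U) → IFml σ U
  | impl : IFml σ U → IFml σ U → IFml σ U
  | snot : IFml σ U → IFml σ U

def IFml.top : IFml σ U := .conj PEmpty (fun x => x.elim)
def IFml.bot : IFml σ U := .disj PEmpty (fun x => x.elim)
def IFml.and2 (F G : IFml σ U) : IFml σ U := .conj Bool (fun b => cond b F G)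
def IFml.or2 (F G : IFml σ U) : IFml σ U := .disj Bool (fun b => cond b F G)
def IFml.neg (F : IFml σ U) : IFml σ U := .impl F .bot

/-- Classical satisfaction of infinitary ground formulas. -/
def isat (I : Interp σ U) : IFml σ U → Prop
  | .atom p args => I.pr p (fun i => (args i).eval I)
  | .eq t1 t2 => t1.eval I = t2.eval I
  | .conj _ f => ∀ i, isat I (f i)
  | .disj _ f => ∃ i, isat I (f i)
  | .impl F G => isat I F → isat I G
  | .snot F => ¬ isat I F

/-- ht-satisfaction of infinitary ground formulas. -/
def ihtSat (H I : Interp σ U) : IFml σ U → Prop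
  | .atom p args => isat I (.atom p args) ∧ isat H (.atom p args)
  | .eq t1 t2 => (t1.eval I = t2.eval I) ∧ (t1.eval H = t2.eval H)
  | .conj _ f => ∀ i, ihtSat H I (f i)
  | .disj _ f => ∃ i, ihtSat H I (f i)
  | .impl F G => (isat I F → isat I G) ∧ (¬ ihtSat H I F ∨ ihtSat H I G)
  | .snot F => ¬ isat I F ∧ ¬ isat H F

open scoped Classical in
/-- The grounding `gr_I(F)` of a sentence `F` over `σ^I` with respect to the
interpretation `I` and the sets `IP`, `IFn` of intensional predicate and function
symbols. -/
noncomputable def grnd (IP : Set σ.Pr) (IFn : Set σ.Fn) (I : Interp σ U) :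
    Fml σ U → IFml σ U
  | .atom p args =>
      if p ∈ IP ∨ ∃ i, ¬ (args i).noIntensional IFn then .atom p args
      else if satF I (.atom p args) then .top else .bot
  | .eq t1 t2 =>
      if ¬ t1.noIntensional IFn ∨ ¬ t2.noIntensional IFn then .eq t1 t2
      else if t1.eval I = t2.eval I then .top else .bot
  | .fls => .bot
  | .conj F G => .and2 (grnd IP IFn I F) (grnd IP IFn I G)
  | .disj F G => .or2 (grnd IP IFn I F) (grnd IP IFn I G)
  | .impl F G => .impl (grnd IP IFn I F) (grnd IP IFn I G)
  | .snot F => .snot (grnd IP IFn I F)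
  | .all s F => .conj (U s) (fun d => grnd IP IFn I (F d))
  | .ex s F => .disj (U s) (fun d => grnd IP IFn I (F d))

/-- For any interpretation `I` of `σ` and any extended first-order
sentence `F` over `σ^I`: `I` satisfies `F` iff `I` satisfies the grounding `gr_I(F)`. -/
theorem stmt3 {σ : Sig} {U : σ.So → Type} (IP : Set σ.Pr) (IFn : Set σ.Fn)
    (I : Interp σ U) (F : Fml σ U) :
    satF I F ↔ isat I (grnd IP IFn I F) := by
  induction F with
  | atom p args =>
    simp only [grnd]
    split
    · simp [satF, isat]
    · split <;> rename_i h <;>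
        simp [satF, isat, IFml.top, IFml.bot, h] <;> exact h
  | eq t1 t2 =>
    simp only [grnd]
    split
    · simp [satF, isat]
    · split <;> rename_i h <;>
        simp [satF, isat, IFml.top, IFml.bot, h]
  | fls => simp [satF, isat, grnd, IFml.bot]
  | conj F G ihF ihG =>
    simp only [grnd, satF, isat, IFml.and2, ihF, ihG]
    constructor
    · rintro ⟨h1,h2⟩ b; cases b <;> simpa
    · intro h; exact ⟨by simpa using h true, by simpa using h false⟩
  | disj F G ihF ihG =>
    simp only [grnd, satF, isat, IFml.or2, ihF, ihG]
    constructor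
    · rintro (h|h); exacts [⟨true, by simpa⟩, ⟨false, by simpa⟩]
    · rintro ⟨b,h⟩; cases b
      · right; simpa using h
      · left; simpa using h
  | impl F G ihF ihG => simp [grnd, satF, isat, ihF, ihG]
  | snot F ihF => simp [grnd, satF, isat, ihF]
  | all s F ih => simp [grnd, satF, isat, ih]
  | ex s F ih => simp [grnd, satF, isat, ih]
end

section
/- For any ht-interpretation ⟨H,I⟩ and any (extended first-order) sentence F over σ^I: ⟨H,I⟩ ⊨ht F iff ⟨H,I⟩ ⊨ht gr_I(F). -/
variable {σ : Sig} {U : σ.So → Type}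

theorem eval_eq_of_noInt {IFn : Set σ.Fn} {J I : Interp σ U}
    (hf : ∀ f ∉ IFn, ∀ a, J.fn f a = I.fn f a)
    {s : σ.So} (t : Term σ U s) (ht : t.noIntensional IFn) :
    t.eval J = t.eval I := by
  induction t with
  | name d => rfl
  | app f args ih =>
    obtain ⟨hfn, hargs⟩ := ht
    simp only [Term.eval]
    rw [hf f hfn]
    congr 1
    funext i
    exact ih i (hargs i)

theorem isat_top {J : Interp σ U} : isat J (IFml.top (σ := σ) (U := U)) := by
  intro i; exact i.elim

theorem not_isat_bot {J : Interp σ U} : ¬ isat J (IFml.bot (σ := σ) (U := U)) := by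
  rintro ⟨i, _⟩; exact i.elim

theorem ihtSat_top {H I : Interp σ U} : ihtSat H I (IFml.top (σ := σ) (U := U)) := by
  intro i; exact i.elim

theorem not_ihtSat_bot {H I : Interp σ U} : ¬ ihtSat H I (IFml.bot (σ := σ) (U := U)) := by
  rintro ⟨i, _⟩; exact i.elim

theorem ihtSat_and2 {H I : Interp σ U} {F G : IFml σ U} :
    ihtSat H I (IFml.and2 F G) ↔ ihtSat H I F ∧ ihtSat H I G := by
  constructor
  · intro h; exact ⟨h true, h false⟩
  · rintro ⟨hF, hG⟩ b; cases b <;> assumption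

theorem ihtSat_or2 {H I : Interp σ U} {F G : IFml σ U} :
    ihtSat H I (IFml.or2 F G) ↔ ihtSat H I F ∨ ihtSat H I G := by
  constructor
  · rintro ⟨b, h⟩; cases b
    · exact Or.inr h
    · exact Or.inl h
  · rintro (h | h)
    · exact ⟨true, h⟩
    · exact ⟨false, h⟩

theorem isat_grnd {IP : Set σ.Pr} {IFn : Set σ.Fn} {I J : Interp σ U}
    (hp : ∀ p ∉ IP, ∀ a, J.pr p a ↔ I.pr p a)
    (hf : ∀ f ∉ IFn, ∀ a, J.fn f a = I.fn f a)
    (F : Fml σ U) : isat J (grnd IP IFn I F) ↔ satF J F := by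
  induction F with
  | atom p args =>
    simp only [grnd]
    split
    · exact Iff.rfl
    · next hcond =>
      push_neg at hcond
      obtain ⟨hpnot, hargs⟩ := hcond
      have hJI : satF J (.atom p args) ↔ satF I (.atom p args) := by
        simp only [satF]
        have : (fun i => (args i).eval J) = (fun i => (args i).eval I) := by
          funext i; exact eval_eq_of_noInt hf (args i) (hargs i)
        rw [this]
        exact hp p hpnot _
      split
      · next hI => exact ⟨fun _ => hJI.mpr hI, fun _ => isat_top⟩
      · next hI =>
        constructor
        · intro h; exact absurd h not_isat_bot
        · intro h; exact absurd (hJI.mp h) hI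
  | eq t1 t2 =>
    simp only [grnd]
    split
    · exact Iff.rfl
    · next hcond =>
      push_neg at hcond
      obtain ⟨h1, h2⟩ := hcond
      have e1 := eval_eq_of_noInt hf t1 h1
      have e2 := eval_eq_of_noInt hf t2 h2
      have hJI : satF J (.eq t1 t2) ↔ satF I (.eq t1 t2) := by
        simp only [satF, e1, e2]
      split
      · next hI => exact ⟨fun _ => hJI.mpr hI, fun _ => isat_top⟩
      · next hI =>
        constructor
        · intro h; exact absurd h not_isat_bot
        · intro h; exact absurd (hJI.mp h) hI
  | fls =>
    simp only [grnd]
    exact ⟨fun h => absurd h not_isat_bot, fun h => h.elim⟩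
  | conj F G ihF ihG =>
    simp only [grnd, satF]
    constructor
    · intro h; exact ⟨ihF.mp (h true), ihG.mp (h false)⟩
    · rintro ⟨hF, hG⟩ b; cases b
      · exact ihG.mpr hG
      · exact ihF.mpr hF
  | disj F G ihF ihG =>
    simp only [grnd, satF]
    constructor
    · rintro ⟨b, h⟩; cases b
      · exact Or.inr (ihG.mp h)
      · exact Or.inl (ihF.mp h)
    · rintro (h | h)
      · exact ⟨true, ihF.mpr h⟩
      · exact ⟨false, ihG.mpr h⟩
  | impl F G ihF ihG =>
    simp only [grnd, satF, isat, ihF, ihG]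
  | snot F ihF =>
    simp only [grnd, satF, isat, ihF]
  | all s F ih =>
    simp only [grnd, satF, isat]
    exact forall_congr' fun d => ih d
  | ex s F ih =>
    simp only [grnd, satF, isat]
    exact exists_congr fun d => ih d

/-- For any ht-interpretation `⟨H,I⟩` and any extended first-order
sentence `F` over `σ^I`: `⟨H,I⟩ ⊨ht F` iff `⟨H,I⟩ ⊨ht gr_I(F)`. -/
theorem stmt4 {σ : Sig} {U : σ.So → Type} (IP : Set σ.Pr) (IFn : Set σ.Fn)
    (H I : Interp σ U) (hHT : preceq IP IFn H I) (F : Fml σ U) :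
    htSat H I F ↔ ihtSat H I (grnd IP IFn I F) := by
  obtain ⟨hpI, hpN, hfN⟩ := hHT
  have hI_grnd := isat_grnd (IP := IP) (IFn := IFn) (I := I) (J := I)
    (fun _ _ _ => Iff.rfl) (fun _ _ _ => rfl)
  have hH_grnd := isat_grnd (IP := IP) (IFn := IFn) (I := I) (J := H) hpN hfN
  induction F with
  | atom p args =>
    simp only [grnd]
    split
    · exact Iff.rfl
    · next hcond =>
      push_neg at hcond
      obtain ⟨hpnot, hargs⟩ := hcond
      have heval : (fun i => (args i).eval H) = (fun i => (args i).eval I) := by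
        funext i; exact eval_eq_of_noInt hfN (args i) (hargs i)
      have hHI : satF H (.atom p args) ↔ satF I (.atom p args) := by
        simp only [satF, heval]
        exact hpN p hpnot _
      split
      · next hsat =>
        constructor
        · intro _; exact ihtSat_top
        · intro _; exact ⟨hsat, hHI.mpr hsat⟩
      · next hsat =>
        constructor
        · rintro ⟨h, _⟩; exact absurd h hsat
        · intro h; exact absurd h not_ihtSat_bot
  | eq t1 t2 =>
    simp only [grnd]
    split
    · exact Iff.rfl
    · next hcond =>
      push_neg at hcond
      obtain ⟨h1, h2⟩ := hcond
      have e1 := eval_eq_of_noInt hfN t1 h1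
      have e2 := eval_eq_of_noInt hfN t2 h2
      split
      · next heq =>
        constructor
        · intro _; exact ihtSat_top
        · intro _; exact ⟨heq, by rw [e1, e2]; exact heq⟩
      · next heq =>
        constructor
        · rintro ⟨h, _⟩; exact absurd h heq
        · intro h; exact absurd h not_ihtSat_bot
  | fls =>
    simp only [grnd, htSat]
    exact ⟨fun h => h.elim, fun h => absurd h not_ihtSat_bot⟩
  | conj F G ihF ihG =>
    simp only [grnd, htSat, ihtSat_and2, ihF, ihG]
  | disj F G ihF ihG =>
    simp only [grnd, htSat, ihtSat_or2, ihF, ihG]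
  | impl F G ihF ihG =>
    simp only [grnd, htSat, ihtSat, satF, hI_grnd, ihF, ihG]
  | snot F ihF =>
    simp only [grnd, htSat, ihtSat, hI_grnd, hH_grnd]
  | all s F ih =>
    simp only [grnd, htSat, ihtSat]
    exact forall_congr' fun d => ih d
  | ex s F ih =>
    simp only [grnd, htSat, ihtSat]
    exact exists_congr fun d => ih d
end

section
/- Let ⟨H,I⟩ be an ht-interpretation and F an infinitary propositional formula of the form F₁ → F₂ where F₂ is a ground atom or a truth constant. Then ⟨H,I⟩ ⊨ht (⌐⌐F₁ → F₂) iff both 𝒜_I ⊨ F and 𝒜_H ⊨ FLP(F, 𝒜_I). -/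
variable {σ : Sig} {U : σ.So → Type}

/-- Ground atoms of `σ^I` (an atom is a predicate symbol with ground argument terms). -/
def GndAtom (σ : Sig) (U : σ.So → Type) : Type :=
  Σ p : σ.Pr, (i : Fin (σ.prArgs p).length) → Term σ U ((σ.prArgs p).get i)

/-- An infinitary ground formula is propositional if it contains no intensional
function symbols (in particular, it is built from atoms only, not equalities). -/
def IFml.IsProp (IFn : Set σ.Fn) : IFml σ U → Prop
  | .atom _ args => ∀ i, (args i).noIntensional IFn
  | .eq _ _ => False
  | .conj _ f => ∀ i, (f i).IsProp IFn
  | .disj _ f => ∀ i, (f i).IsProp IFn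
  | .impl F G => F.IsProp IFn ∧ G.IsProp IFn
  | .snot F => F.IsProp IFn

/-- Satisfaction of infinitary formulas by a propositional interpretation, i.e. a
set of ground atoms (only meaningful for propositional formulas). -/
def psat (A : Set (GndAtom σ U)) : IFml σ U → Prop
  | .atom p args => (⟨p, args⟩ : GndAtom σ U) ∈ A
  | .eq _ _ => False
  | .conj _ f => ∀ i, psat A (f i)
  | .disj _ f => ∃ i, psat A (f i)
  | .impl F G => psat A F → psat A G
  | .snot F => ¬ psat A F

/-- `𝒜_I`: the set of ground atoms without intensional function symbols
satisfied by `I`. -/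
def propOf (IFn : Set σ.Fn) (I : Interp σ U) : Set (GndAtom σ U) :=
  { a | (∀ i, (a.2 i).noIntensional IFn) ∧ satF I (.atom a.1 a.2) }

open scoped Classical in
/-- The FLP-reduct of an implication `F₁ → F₂` with respect to a propositional
interpretation `A`: the implication itself if `A ⊨ F₁`, and `⊤` otherwise. -/
noncomputable def flpImp (F1 F2 : IFml σ U) (A : Set (GndAtom σ U)) : IFml σ U :=
  if psat A F1 then .impl F1 F2 else .top

/-- `F` is a ground atom or a truth constant (`⊤` or `⊥`). -/
def IsAtomOrTC (F : IFml σ U) : Prop :=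
  (∃ p args, F = IFml.atom p args) ∨ F = IFml.top ∨ F = IFml.bot


lemma psat_isat {σ : Sig} {U : σ.So → Type} (IFn : Set σ.Fn) (I : Interp σ U) :
    ∀ F : IFml σ U, F.IsProp IFn → (psat (propOf IFn I) F ↔ isat I F) := by
  intro F
  induction F with
  | atom p args =>
      intro h
      exact ⟨fun x => x.2, fun x => ⟨h, x⟩⟩
  | eq t1 t2 => intro h; exact h.elim
  | conj ι f ih => intro h; exact forall_congr' fun i => ih i (h i)
  | disj ι f ih => intro h; exact exists_congr fun i => ih i (h i)
  | impl F G ihF ihG => intro h; exact imp_congr (ihF h.1) (ihG h.2)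
  | snot F ih => intro h; exact not_congr (ih h)

/-- Let `⟨H,I⟩` be an ht-interpretation and `F` an infinitary
propositional formula of the form `F₁ → F₂` where `F₂` is a ground atom or a truth
constant. Then `⟨H,I⟩ ⊨ht (⌐⌐F₁ → F₂)` iff both `𝒜_I ⊨ F` and
`𝒜_H ⊨ FLP(F, 𝒜_I)`. -/
theorem stmt7 {σ : Sig} {U : σ.So → Type} (IP : Set σ.Pr) (IFn : Set σ.Fn)
    (H I : Interp σ U) (hHT : preceq IP IFn H I)
    (F1 F2 : IFml σ U) (h1 : F1.IsProp IFn) (h2 : F2.IsProp IFn)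
    (hA : IsAtomOrTC F2) :
    ihtSat H I (.impl (.snot (.snot F1)) F2) ↔
      (psat (propOf IFn I) (.impl F1 F2) ∧
       psat (propOf IFn H) (flpImp F1 F2 (propOf IFn I))) := by
  have hI1 := psat_isat IFn I F1 h1
  have hI2 := psat_isat IFn I F2 h2
  have hH1 := psat_isat IFn H F1 h1
  have hH2 := psat_isat IFn H F2 h2
  have hF2 : ihtSat H I F2 ↔ (isat I F2 ∧ isat H F2) := by
    rcases hA with ⟨p, args, rfl⟩ | rfl | rfl
    · exact Iff.rfl
    · simp [IFml.top, ihtSat, isat]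
    · simp [IFml.bot, ihtSat, isat]
  simp only [ihtSat, isat, psat, flpImp, hF2, hI1, hI2]
  split_ifs with hp
  · simp only [psat, hH1, hH2]
    rw [hI1] at hp
    tauto
  · simp only [IFml.top, psat, isat, forall_const]
    rw [hI1] at hp
    constructor
    · rintro ⟨a, _⟩
      exact ⟨fun h => absurd (by tauto) hp, fun x => x.elim⟩
    · rintro ⟨a, _⟩
      exact ⟨fun h => absurd (by tauto) hp, Or.inl (by tauto)⟩
end

section
/- Let ⟨H,I⟩ be an ht-interpretation and F a ground dlv-implication of the form F₁ → F₂. Then ⟨H,I⟩ ⊨ht F iff ⟨H,I⟩ ⊨ht (⌐⌐(F₁ⁿ) → F₂), where F₁ⁿ is the result of replacing every occurrence of ⌐ in F₁ by ¬. -/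
variable {σ : Sig} {U : σ.So → Type}

/-- `⊤` as a formula (`¬⊥`). -/
def Fml.top : Fml σ U := Fml.fls.neg

/-- Atomic formulas: atoms and equalities. -/
def Fml.IsAtomic (F : Fml σ U) : Prop :=
  (∃ p args, F = Fml.atom p args) ∨ (∃ (s : σ.So) (t1 t2 : Term σ U s), F = Fml.eq t1 t2)

/-- A dlv-literal: an atomic formula, a truth constant (`⊤` or `⊥`), or an
expression of one of the forms `⌐A`, `⌐⌐A` with `A` an atomic formula. -/
inductive IsDlvLit : Fml σ U → Prop where
  | atomic {F : Fml σ U} : F.IsAtomic → IsDlvLit F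
  | bot : IsDlvLit Fml.fls
  | top : IsDlvLit Fml.top
  | snot {F : Fml σ U} : F.IsAtomic → IsDlvLit (.snot F)
  | snot2 {F : Fml σ U} : F.IsAtomic → IsDlvLit (.snot (.snot F))

/-- A (ground) conjunction of dlv-literals. -/
inductive IsDlvConj : Fml σ U → Prop where
  | lit {F : Fml σ U} : IsDlvLit F → IsDlvConj F
  | and {F G : Fml σ U} : IsDlvConj F → IsDlvConj G → IsDlvConj (.conj F G)

/-- `Fⁿ`: the result of replacing every occurrence of `⌐` in `F` by `¬`. -/
def Fml.toN : Fml σ U → Fml σ U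
  | .atom p args => .atom p args
  | .eq t1 t2 => .eq t1 t2
  | .fls => .fls
  | .conj F G => .conj F.toN G.toN
  | .disj F G => .disj F.toN G.toN
  | .impl F G => .impl F.toN G.toN
  | .snot F => F.toN.neg
  | .all s F => .all s (fun d => (F d).toN)
  | .ex s F => .ex s (fun d => (F d).toN)


lemma toN_sat {σ : Sig} {U : σ.So → Type} (J : Interp σ U) :
    ∀ F : Fml σ U, satF J F.toN ↔ satF J F := by
  intro F
  induction F with
  | atom p args => simp [Fml.toN]
  | eq t1 t2 => simp [Fml.toN]
  | fls => simp [Fml.toN]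
  | conj F G ihF ihG => simp [Fml.toN, satF, ihF, ihG]
  | disj F G ihF ihG => simp [Fml.toN, satF, ihF, ihG]
  | impl F G ihF ihG => simp [Fml.toN, satF, ihF, ihG]
  | snot F ihF => simp [Fml.toN, Fml.neg, satF, ihF]
  | all s F ih => simp [Fml.toN, satF, ih]
  | ex s F ih => simp [Fml.toN, satF, ih]

lemma dlv_ht {σ : Sig} {U : σ.So → Type} (H I : Interp σ U) (F : Fml σ U)
    (h : IsDlvConj F) : htSat H I F ↔ satF I F ∧ satF H F := by
  induction h with
  | lit hl =>
    cases hl with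
    | atomic ha =>
      rcases ha with ⟨p, args, rfl⟩ | ⟨s, t1, t2, rfl⟩ <;> simp [htSat, satF]
    | bot => simp [htSat, satF]
    | top => simp [htSat, satF, Fml.top, Fml.neg]
    | snot ha => simp [htSat, satF]
    | snot2 ha => simp [htSat, satF]
  | and hF hG ihF ihG => simp [htSat, satF, ihF, ihG]; tauto

/-- Let `⟨H,I⟩` be an ht-interpretation and `F` a ground
dlv-implication `F₁ → F₂` (`F₁` a conjunction of dlv-literals, `F₂` an atomic
formula or `⊥`). Then `⟨H,I⟩ ⊨ht F` iff `⟨H,I⟩ ⊨ht (⌐⌐(F₁ⁿ) → F₂)`. -/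
theorem stmt9 {σ : Sig} {U : σ.So → Type} (IP : Set σ.Pr) (IFn : Set σ.Fn)
    (H I : Interp σ U) (hHT : preceq IP IFn H I)
    (F1 F2 : Fml σ U) (h1 : IsDlvConj F1) (h2 : F2.IsAtomic ∨ F2 = Fml.fls) :
    htSat H I (.impl F1 F2) ↔ htSat H I (.impl (.snot (.snot F1.toN)) F2) := by
  have hI := toN_sat I F1
  have hH := toN_sat H F1
  have hd := dlv_ht H I F1 h1
  simp only [htSat, satF, hd, hI, hH]
  constructor
  · rintro ⟨hc, h⟩
    refine ⟨fun h' => hc (by tauto), ?_⟩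
    tauto
  · rintro ⟨hc, h⟩
    refine ⟨fun h' => hc (by tauto), ?_⟩
    tauto
end
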